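/- Let (Θ, Φ) be random angles with circular means μ₁ = μ₂ = 0, and suppose all relevant second moments exist with E(sin²Θ), E(sin²Φ), E(cos²Θ)(1−E(cos²Θ)), E(cos²Φ)(1−E(cos²Φ)) all positive, and E(sinΘcosΘ) = E(sinΦcosΦ) = E(sinΘcosΦ) = E(cosΘsinΦ) = 0. Then ρ_FL(Θ,Φ) = δ·ρ_JS(Θ,Φ) where ρ_JS = E(sinΘ sinΦ)/√(E(sin²Θ)E(sin²Φ)), ρ_FL is computed from i.i.d. copies as E[sin(Θ₁−Θ₂)sin(Φ₁−Φ₂)]/√(E[sin²(Θ₁−Θ₂)]E[sin²(Φ₁−Φ₂)]), and δ = E(cosΘ cosΦ)/√(E(cos²Θ)E(cos²Φ)). -/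
import Mathlib


open MeasureTheory

theorem stmt_19 {Ω : Type*} [MeasurableSpace Ω] (μ : Measure Ω) [IsProbabilityMeasure μ]
    (Θ Φ : Ω → ℝ)
    -- circular means μ₁ = μ₂ = 0
    (hmean1 : ∫ ω, Real.sin (Θ ω) ∂μ = 0)
    (hmean2 : ∫ ω, Real.sin (Φ ω) ∂μ = 0)
    -- existence of all relevant second moments
    (hss : Integrable (fun ω => Real.sin (Θ ω) * Real.sin (Φ ω)) μ)
    (hcc : Integrable (fun ω => Real.cos (Θ ω) * Real.cos (Φ ω)) μ)
    (hsc : Integrable (fun ω => Real.sin (Θ ω) * Real.cos (Φ ω)) μ)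
    (hcs : Integrable (fun ω => Real.cos (Θ ω) * Real.sin (Φ ω)) μ)
    (hscΘ : Integrable (fun ω => Real.sin (Θ ω) * Real.cos (Θ ω)) μ)
    (hscΦ : Integrable (fun ω => Real.sin (Φ ω) * Real.cos (Φ ω)) μ)
    -- positivity conditions
    (hpos1 : 0 < ∫ ω, Real.sin (Θ ω) ^ 2 ∂μ)
    (hpos2 : 0 < ∫ ω, Real.sin (Φ ω) ^ 2 ∂μ)
    (hpos3 : 0 < (∫ ω, Real.cos (Θ ω) ^ 2 ∂μ) * (1 - ∫ ω, Real.cos (Θ ω) ^ 2 ∂μ))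
    (hpos4 : 0 < (∫ ω, Real.cos (Φ ω) ^ 2 ∂μ) * (1 - ∫ ω, Real.cos (Φ ω) ^ 2 ∂μ))
    -- vanishing mixed moments
    (hv1 : ∫ ω, Real.sin (Θ ω) * Real.cos (Θ ω) ∂μ = 0)
    (hv2 : ∫ ω, Real.sin (Φ ω) * Real.cos (Φ ω) ∂μ = 0)
    (hv3 : ∫ ω, Real.sin (Θ ω) * Real.cos (Φ ω) ∂μ = 0)
    (hv4 : ∫ ω, Real.cos (Θ ω) * Real.sin (Φ ω) ∂μ = 0) :
    -- ρ_FL = δ · ρ_JS, with ρ_FL computed from i.i.d. copies (the product measure μ × μ)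
    (∫ ω : Ω × Ω, Real.sin (Θ ω.1 - Θ ω.2) * Real.sin (Φ ω.1 - Φ ω.2) ∂(μ.prod μ)) /
        Real.sqrt ((∫ ω : Ω × Ω, Real.sin (Θ ω.1 - Θ ω.2) ^ 2 ∂(μ.prod μ)) *
          (∫ ω : Ω × Ω, Real.sin (Φ ω.1 - Φ ω.2) ^ 2 ∂(μ.prod μ)))
      = ((∫ ω, Real.cos (Θ ω) * Real.cos (Φ ω) ∂μ) /
            Real.sqrt ((∫ ω, Real.cos (Θ ω) ^ 2 ∂μ) * (∫ ω, Real.cos (Φ ω) ^ 2 ∂μ))) *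
        ((∫ ω, Real.sin (Θ ω) * Real.sin (Φ ω) ∂μ) /
            Real.sqrt ((∫ ω, Real.sin (Θ ω) ^ 2 ∂μ) * (∫ ω, Real.sin (Φ ω) ^ 2 ∂μ))) := by
  -- abbreviations
  set A := ∫ ω, Real.sin (Θ ω) * Real.sin (Φ ω) ∂μ with hA
  set C := ∫ ω, Real.cos (Θ ω) * Real.cos (Φ ω) ∂μ with hC
  set a := ∫ ω, Real.sin (Θ ω) ^ 2 ∂μ with ha
  set b := ∫ ω, Real.cos (Θ ω) ^ 2 ∂μ with hb
  set a' := ∫ ω, Real.sin (Φ ω) ^ 2 ∂μ with ha'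
  set b' := ∫ ω, Real.cos (Φ ω) ^ 2 ∂μ with hb'
  have hbpos : 0 < b := by nlinarith [hpos3]
  have hb'pos : 0 < b' := by nlinarith [hpos4]
  -- integrabilities of squares
  have is2Θ : Integrable (fun ω => Real.sin (Θ ω) ^ 2) μ := by
    by_contra h; rw [ha, integral_undef h] at hpos1; exact lt_irrefl _ hpos1
  have is2Φ : Integrable (fun ω => Real.sin (Φ ω) ^ 2) μ := by
    by_contra h; rw [ha', integral_undef h] at hpos2; exact lt_irrefl _ hpos2
  have ic2Θ : Integrable (fun ω => Real.cos (Θ ω) ^ 2) μ := by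
    by_contra h; rw [hb, integral_undef h] at hbpos; exact lt_irrefl _ hbpos
  have ic2Φ : Integrable (fun ω => Real.cos (Φ ω) ^ 2) μ := by
    by_contra h; rw [hb', integral_undef h] at hb'pos; exact lt_irrefl _ hb'pos
  -- numerator of ρ_FL
  have hnum : (∫ ω : Ω × Ω, Real.sin (Θ ω.1 - Θ ω.2) * Real.sin (Φ ω.1 - Φ ω.2) ∂(μ.prod μ))
      = 2 * A * C := by
    have i1 : Integrable (fun ω : Ω × Ω =>
        Real.sin (Θ ω.1) * Real.sin (Φ ω.1) * (Real.cos (Θ ω.2) * Real.cos (Φ ω.2)))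
        (μ.prod μ) := hss.mul_prod hcc
    have i2 : Integrable (fun ω : Ω × Ω =>
        Real.sin (Θ ω.1) * Real.cos (Φ ω.1) * (Real.cos (Θ ω.2) * Real.sin (Φ ω.2)))
        (μ.prod μ) := hsc.mul_prod hcs
    have i3 : Integrable (fun ω : Ω × Ω =>
        Real.cos (Θ ω.1) * Real.sin (Φ ω.1) * (Real.sin (Θ ω.2) * Real.cos (Φ ω.2)))
        (μ.prod μ) := hcs.mul_prod hsc
    have i4 : Integrable (fun ω : Ω × Ω =>
        Real.cos (Θ ω.1) * Real.cos (Φ ω.1) * (Real.sin (Θ ω.2) * Real.sin (Φ ω.2)))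
        (μ.prod μ) := hcc.mul_prod hss
    have i12 : Integrable (fun ω : Ω × Ω =>
        Real.sin (Θ ω.1) * Real.sin (Φ ω.1) * (Real.cos (Θ ω.2) * Real.cos (Φ ω.2)) -
        Real.sin (Θ ω.1) * Real.cos (Φ ω.1) * (Real.cos (Θ ω.2) * Real.sin (Φ ω.2)))
        (μ.prod μ) := i1.sub i2
    have i34 : Integrable (fun ω : Ω × Ω =>
        Real.cos (Θ ω.1) * Real.sin (Φ ω.1) * (Real.sin (Θ ω.2) * Real.cos (Φ ω.2)) -
        Real.cos (Θ ω.1) * Real.cos (Φ ω.1) * (Real.sin (Θ ω.2) * Real.sin (Φ ω.2)))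
        (μ.prod μ) := i3.sub i4
    have hfun : (fun ω : Ω × Ω => Real.sin (Θ ω.1 - Θ ω.2) * Real.sin (Φ ω.1 - Φ ω.2))
        = fun ω : Ω × Ω =>
          (Real.sin (Θ ω.1) * Real.sin (Φ ω.1) * (Real.cos (Θ ω.2) * Real.cos (Φ ω.2)) -
           Real.sin (Θ ω.1) * Real.cos (Φ ω.1) * (Real.cos (Θ ω.2) * Real.sin (Φ ω.2))) -
          (Real.cos (Θ ω.1) * Real.sin (Φ ω.1) * (Real.sin (Θ ω.2) * Real.cos (Φ ω.2)) -
           Real.cos (Θ ω.1) * Real.cos (Φ ω.1) * (Real.sin (Θ ω.2) * Real.sin (Φ ω.2))) := by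
      funext ω; simp only [Real.sin_sub]; ring
    rw [hfun, integral_sub i12 i34, integral_sub i1 i2, integral_sub i3 i4,
      integral_prod_mul (fun x => Real.sin (Θ x) * Real.sin (Φ x))
        (fun x => Real.cos (Θ x) * Real.cos (Φ x)),
      integral_prod_mul (fun x => Real.sin (Θ x) * Real.cos (Φ x))
        (fun x => Real.cos (Θ x) * Real.sin (Φ x)),
      integral_prod_mul (fun x => Real.cos (Θ x) * Real.sin (Φ x))
        (fun x => Real.sin (Θ x) * Real.cos (Φ x)),
      integral_prod_mul (fun x => Real.cos (Θ x) * Real.cos (Φ x))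
        (fun x => Real.sin (Θ x) * Real.sin (Φ x))]
    rw [← hA, ← hC, hv3, hv4]; ring
  -- denominators of ρ_FL
  have hdenΘ : (∫ ω : Ω × Ω, Real.sin (Θ ω.1 - Θ ω.2) ^ 2 ∂(μ.prod μ)) = 2 * a * b := by
    have i1 : Integrable (fun ω : Ω × Ω => Real.sin (Θ ω.1) ^ 2 * Real.cos (Θ ω.2) ^ 2)
        (μ.prod μ) := is2Θ.mul_prod ic2Θ
    have i2 : Integrable (fun ω : Ω × Ω =>
        Real.sin (Θ ω.1) * Real.cos (Θ ω.1) * (Real.sin (Θ ω.2) * Real.cos (Θ ω.2)))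
        (μ.prod μ) := hscΘ.mul_prod hscΘ
    have i2' : Integrable (fun ω : Ω × Ω =>
        2 * (Real.sin (Θ ω.1) * Real.cos (Θ ω.1) * (Real.sin (Θ ω.2) * Real.cos (Θ ω.2))))
        (μ.prod μ) := i2.const_mul 2
    have i3 : Integrable (fun ω : Ω × Ω => Real.cos (Θ ω.1) ^ 2 * Real.sin (Θ ω.2) ^ 2)
        (μ.prod μ) := ic2Θ.mul_prod is2Θ
    have i12 : Integrable (fun ω : Ω × Ω =>
        Real.sin (Θ ω.1) ^ 2 * Real.cos (Θ ω.2) ^ 2 -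
        2 * (Real.sin (Θ ω.1) * Real.cos (Θ ω.1) * (Real.sin (Θ ω.2) * Real.cos (Θ ω.2))))
        (μ.prod μ) := i1.sub i2'
    have hfun : (fun ω : Ω × Ω => Real.sin (Θ ω.1 - Θ ω.2) ^ 2)
        = fun ω : Ω × Ω =>
          (Real.sin (Θ ω.1) ^ 2 * Real.cos (Θ ω.2) ^ 2 -
            2 * (Real.sin (Θ ω.1) * Real.cos (Θ ω.1) * (Real.sin (Θ ω.2) * Real.cos (Θ ω.2)))) +
          Real.cos (Θ ω.1) ^ 2 * Real.sin (Θ ω.2) ^ 2 := by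
      funext ω; simp only [Real.sin_sub]; ring
    rw [hfun, integral_add i12 i3, integral_sub i1 i2', integral_const_mul,
      integral_prod_mul (fun x => Real.sin (Θ x) ^ 2) (fun x => Real.cos (Θ x) ^ 2),
      integral_prod_mul (fun x => Real.sin (Θ x) * Real.cos (Θ x))
        (fun x => Real.sin (Θ x) * Real.cos (Θ x)),
      integral_prod_mul (fun x => Real.cos (Θ x) ^ 2) (fun x => Real.sin (Θ x) ^ 2)]
    rw [← ha, ← hb, hv1]; ring
  have hdenΦ : (∫ ω : Ω × Ω, Real.sin (Φ ω.1 - Φ ω.2) ^ 2 ∂(μ.prod μ)) = 2 * a' * b' := by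
    have i1 : Integrable (fun ω : Ω × Ω => Real.sin (Φ ω.1) ^ 2 * Real.cos (Φ ω.2) ^ 2)
        (μ.prod μ) := is2Φ.mul_prod ic2Φ
    have i2 : Integrable (fun ω : Ω × Ω =>
        Real.sin (Φ ω.1) * Real.cos (Φ ω.1) * (Real.sin (Φ ω.2) * Real.cos (Φ ω.2)))
        (μ.prod μ) := hscΦ.mul_prod hscΦ
    have i2' : Integrable (fun ω : Ω × Ω =>
        2 * (Real.sin (Φ ω.1) * Real.cos (Φ ω.1) * (Real.sin (Φ ω.2) * Real.cos (Φ ω.2))))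
        (μ.prod μ) := i2.const_mul 2
    have i3 : Integrable (fun ω : Ω × Ω => Real.cos (Φ ω.1) ^ 2 * Real.sin (Φ ω.2) ^ 2)
        (μ.prod μ) := ic2Φ.mul_prod is2Φ
    have i12 : Integrable (fun ω : Ω × Ω =>
        Real.sin (Φ ω.1) ^ 2 * Real.cos (Φ ω.2) ^ 2 -
        2 * (Real.sin (Φ ω.1) * Real.cos (Φ ω.1) * (Real.sin (Φ ω.2) * Real.cos (Φ ω.2))))
        (μ.prod μ) := i1.sub i2'
    have hfun : (fun ω : Ω × Ω => Real.sin (Φ ω.1 - Φ ω.2) ^ 2)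
        = fun ω : Ω × Ω =>
          (Real.sin (Φ ω.1) ^ 2 * Real.cos (Φ ω.2) ^ 2 -
            2 * (Real.sin (Φ ω.1) * Real.cos (Φ ω.1) * (Real.sin (Φ ω.2) * Real.cos (Φ ω.2)))) +
          Real.cos (Φ ω.1) ^ 2 * Real.sin (Φ ω.2) ^ 2 := by
      funext ω; simp only [Real.sin_sub]; ring
    rw [hfun, integral_add i12 i3, integral_sub i1 i2', integral_const_mul,
      integral_prod_mul (fun x => Real.sin (Φ x) ^ 2) (fun x => Real.cos (Φ x) ^ 2),
      integral_prod_mul (fun x => Real.sin (Φ x) * Real.cos (Φ x))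
        (fun x => Real.sin (Φ x) * Real.cos (Φ x)),
      integral_prod_mul (fun x => Real.cos (Φ x) ^ 2) (fun x => Real.sin (Φ x) ^ 2)]
    rw [← ha', ← hb', hv2]; ring
  rw [hnum, hdenΘ, hdenΦ]
  have hsqrt : Real.sqrt (2 * a * b * (2 * a' * b'))
      = 2 * (Real.sqrt (b * b') * Real.sqrt (a * a')) := by
    rw [show 2 * a * b * (2 * a' * b') = 2 ^ 2 * ((b * b') * (a * a')) by ring,
      Real.sqrt_mul (by positivity), Real.sqrt_sq (by norm_num),
      Real.sqrt_mul (by positivity)]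
  rw [hsqrt]
  have h1 : 0 < Real.sqrt (b * b') := Real.sqrt_pos.mpr (by positivity)
  have h2 : 0 < Real.sqrt (a * a') := Real.sqrt_pos.mpr (by positivity)
  field_simp
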